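/- For any positive integer n and partition λ, the number of semistandard Young tableaux of shape λ with entries in [1,n] equals ∑_{σ ∈ SYT(λ)} C(n + 𝒜(σ), |λ|), where 𝒜(σ) is the number of indices k ∈ [1, |λ|−1] such that k+1 appears in σ in the same or a higher row than k. -/

import Mathlib

/-!
Standardizing a semistandard tableau `τ` (numbering its cells `1, …, |λ|` by increasing entry,
ties broken from left to right) gives a standard tableau `σ`, and the `τ` with standardization
`σ` are exactly the `a ∘ σ` for sequences `1 ≤ a₁ ≤ ⋯ ≤ a_N ≤ n` that increase strictly at each
descent of `σ` (an index `k` with `k + 1` in a lower row than `k`). Adding to `a_k` the number of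
ascents below `k` turns these bijectively into strictly increasing sequences in
`[1, n + 𝒜(σ)]`, i.e. into `N`-subsets of that interval.
-/

structure Ptn where
  parts : ℕ → ℕ
  antitone : ∀ m n : ℕ, m ≤ n → parts n ≤ parts m
  finite : ∃ N : ℕ, ∀ n : ℕ, N ≤ n → parts n = 0

namespace Ptn

/-- 1-indexed Young diagram of a partition. -/
def ycells (l : Ptn) : Set (ℕ × ℕ) :=
  {p | 1 ≤ p.1 ∧ 1 ≤ p.2 ∧ p.2 ≤ l.parts (p.1 - 1)}

/-- number of cells, `|λ|`. -/
noncomputable def size (l : Ptn) : ℕ := l.ycells.ncard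

/-- number of nonzero parts, `ℓ(λ)`. -/
noncomputable def length (l : Ptn) : ℕ := {i : ℕ | l.parts i ≠ 0}.ncard

/-- `λ` and `μ` differ by a square. -/
def Differs (l m : Ptn) : Prop :=
  ∃ i : ℕ, (l.parts i = m.parts i + 1 ∨ m.parts i = l.parts i + 1) ∧
    ∀ k : ℕ, k ≠ i → l.parts k = m.parts k

/-- `λ` and `μ` differ by a square whose content is `d`. -/
def DiffersAt (l m : Ptn) (d : ℤ) : Prop :=
  ∃ i : ℕ, (l.parts i = m.parts i + 1 ∨ m.parts i = l.parts i + 1) ∧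
    (∀ k : ℕ, k ≠ i → l.parts k = m.parts k) ∧
    (max (l.parts i) (m.parts i) : ℤ) - 1 - (i : ℤ) = d

/-- `ρ_d(λ)`: number of cells of content `d`. -/
noncomputable def rho (l : Ptn) (d : ℤ) : ℕ :=
  {p ∈ l.ycells | (p.2 : ℤ) - (p.1 : ℤ) = d}.ncard

/-- rank: number of diagonal cells. -/
noncomputable def rank (l : Ptn) : ℕ := {i : ℕ | i < l.parts i}.ncard

/-- conjugate partition parts (0-indexed). -/
noncomputable def conj (l : Ptn) (k : ℕ) : ℕ := {i : ℕ | k < l.parts i}.ncard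

end Ptn

/-- `R_d(T)`: number of points of `T` of content `d`. -/
noncomputable def Rd (T : Set (ℕ × ℕ)) (d : ℤ) : ℕ :=
  {p ∈ T | (p.2 : ℤ) - (p.1 : ℤ) = d}.ncard

/-- `c` is the `(a,b)`-complement of `l`. -/
def IsComplementOf (a b : ℕ) (c l : Ptn) : Prop :=
  ∀ k : ℕ, c.parts k = if k < a then b - l.parts (a - 1 - k) else 0

/-- `σ` is a standard Young tableau of shape `lam` (entries `1,...,|λ|`,
strictly increasing along rows and columns, `0` outside the diagram). -/
def IsSYT (lam : Ptn) (σ : ℕ × ℕ → ℕ) : Prop :=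
  (∀ p : ℕ × ℕ, p ∉ lam.ycells → σ p = 0) ∧
  Set.BijOn σ lam.ycells (Set.Icc 1 lam.size) ∧
  (∀ p ∈ lam.ycells, ∀ q ∈ lam.ycells, p.1 = q.1 → p.2 < q.2 → σ p < σ q) ∧
  (∀ p ∈ lam.ycells, ∀ q ∈ lam.ycells, p.2 = q.2 → p.1 < q.1 → σ p < σ q)

/-- `τ` is a semistandard Young tableau of shape `lam` with entries in `[1,n]`. -/
def IsSSYT (n : ℕ) (lam : Ptn) (τ : ℕ × ℕ → ℕ) : Prop :=
  (∀ p : ℕ × ℕ, p ∉ lam.ycells → τ p = 0) ∧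
  (∀ p ∈ lam.ycells, 1 ≤ τ p ∧ τ p ≤ n) ∧
  (∀ p ∈ lam.ycells, ∀ q ∈ lam.ycells, p.1 = q.1 → p.2 ≤ q.2 → τ p ≤ τ q) ∧
  (∀ p ∈ lam.ycells, ∀ q ∈ lam.ycells, p.2 = q.2 → p.1 < q.1 → τ p < τ q)

/-- The number of ascents of a standard Young tableau `σ`: indices `k ∈ [1,|λ|-1]`
such that `k+1` appears in the same or a higher row than `k`. -/
noncomputable def ascents (lam : Ptn) (σ : ℕ × ℕ → ℕ) : ℕ :=
  {k : ℕ | 1 ≤ k ∧ k < lam.size ∧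
    ∃ p ∈ lam.ycells, ∃ q ∈ lam.ycells, σ p = k ∧ σ q = k + 1 ∧ q.1 ≤ p.1}.ncard

open Finset

namespace Ptn

lemma ycells_finite (l : Ptn) : l.ycells.Finite := by
  obtain ⟨N, hN⟩ := l.finite
  refine (Set.finite_Icc (1, 1) (N + 1, l.parts 0)).subset fun p ⟨h1, h2, h3⟩ => ?_
  have hrow : p.1 ≤ N + 1 := by
    by_contra! h
    have := hN (p.1 - 1) (by omega)
    omega
  exact ⟨⟨h1, h2⟩, hrow, h3.trans (l.antitone 0 _ (Nat.zero_le _))⟩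

noncomputable def cellFinset (l : Ptn) : Finset (ℕ × ℕ) := l.ycells_finite.toFinset

@[simp]
lemma coe_cellFinset (l : Ptn) : (l.cellFinset : Set (ℕ × ℕ)) = l.ycells :=
  l.ycells_finite.coe_toFinset

@[simp]
lemma mem_cellFinset {l : Ptn} {p : ℕ × ℕ} : p ∈ l.cellFinset ↔ p ∈ l.ycells :=
  l.ycells_finite.mem_toFinset

lemma size_eq_card_cellFinset (l : Ptn) : l.size = #l.cellFinset := by
  rw [size, ← coe_cellFinset, Set.ncard_coe_finset]

lemma mk_mem_ycells {l : Ptn} {p q : ℕ × ℕ} (hp : p ∈ l.ycells) (hq : q ∈ l.ycells)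
    (h : p.1 ≤ q.1) : (p.1, q.2) ∈ l.ycells :=
  ⟨hp.1, hq.2.1, hq.2.2.trans (l.antitone (p.1 - 1) (q.1 - 1) (by omega))⟩

end Ptn

lemma eq_of_eqOn_of_eq_zero {ι M : Type*} [Zero M] {f g : ι → M} {s : Set ι}
    (hf : ∀ x ∉ s, f x = 0) (hg : ∀ x ∉ s, g x = 0) (h : Set.EqOn f g s) : f = g :=
  funext fun x => by
    by_cases hx : x ∈ s
    · exact h hx
    · exact (hf x hx).trans (hg x hx).symm

lemma finite_setOf_eq_zero_of_notMem_of_le {ι : Type*} {s : Set ι} (hs : s.Finite) (B : ℕ) :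
    {f : ι → ℕ | (∀ x ∉ s, f x = 0) ∧ ∀ x ∈ s, f x ≤ B}.Finite := by
  have := hs.to_subtype
  refine Set.Finite.of_finite_image (f := fun f (x : s) => f x)
    ((Set.Finite.pi fun _ => Set.finite_Iic B).subset ?_) ?_
  · rintro _ ⟨f, hf, rfl⟩ x -
    exact hf.2 x x.2
  · intro f hf g hg h
    exact eq_of_eqOn_of_eq_zero hf.1 hg.1 fun x hx => congrFun h ⟨x, hx⟩

lemma ncard_eq_finsum_ncard_fiber {α β : Type*} {s : Set α} {t : Set β} (hs : s.Finite)
    (ht : t.Finite) {f : α → β} (hf : Set.MapsTo f s t) :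
    s.ncard = ∑ᶠ y ∈ t, {x ∈ s | f x = y}.ncard := by
  classical
  rw [← ht.coe_toFinset, finsum_mem_coe_finset, Set.ncard_eq_toFinset_card s hs,
    card_eq_sum_card_fiberwise (f := f) (t := ht.toFinset) (by simpa using hf)]
  refine sum_congr rfl fun y _ => ?_
  rw [← Set.ncard_coe_finset, coe_filter]
  simp

section Rank

variable {α β : Type*} [LinearOrder α] {s : Finset α} {x y : α}

def rankIn (s : Finset α) (x : α) : ℕ := #{y ∈ s | y ≤ x}

lemma rankIn_le_rankIn (h : x ≤ y) : rankIn s x ≤ rankIn s y :=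
  card_le_card fun z hz => by
    rw [mem_filter] at hz ⊢
    exact ⟨hz.1, hz.2.trans h⟩

lemma rankIn_lt_rankIn (hy : y ∈ s) (h : x < y) : rankIn s x < rankIn s y := by
  refine card_lt_card ((ssubset_iff_of_subset fun z hz => ?_).2 ⟨y, ?_, ?_⟩)
  · rw [mem_filter] at hz ⊢
    exact ⟨hz.1, hz.2.trans h.le⟩
  · simp [hy]
  · simp [h]

lemma rankIn_bijOn (s : Finset α) : Set.BijOn (rankIn s) s (Set.Icc 1 #s) := by
  have hmaps : Set.MapsTo (rankIn s) s (Set.Icc 1 #s) := fun x hx =>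
    ⟨card_pos.2 ⟨x, by simpa using hx⟩, card_filter_le _ _⟩
  have hinj : Set.InjOn (rankIn s) s :=
    StrictMonoOn.injOn fun _ _ _ hy h => rankIn_lt_rankIn hy h
  have himage : s.image (rankIn s) = Finset.Icc 1 #s := by
    refine eq_of_subset_of_card_le (fun k hk => ?_) ?_
    · obtain ⟨x, hx, rfl⟩ := mem_image.1 hk
      simpa using hmaps hx
    · rw [card_image_of_injOn hinj, Nat.card_Icc, Nat.add_sub_cancel]
  refine ⟨hmaps, hinj, fun k hk => ?_⟩
  rw [← coe_image, himage, coe_Icc]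
  exact hk

lemma rankIn_image {s : Finset β} {f : β → α} (hf : Set.InjOn f s) (x : β) :
    rankIn (s.image f) (f x) = #{y ∈ s | f y ≤ f x} := by
  rw [rankIn, filter_image, card_image_of_injOn (hf.mono (coe_subset.2 (filter_subset _ _)))]

lemma rankIn_Icc_one {N k : ℕ} (hk : k ≤ N) : rankIn (Finset.Icc 1 N) k = k := by
  have : {y ∈ Finset.Icc 1 N | y ≤ k} = Finset.Icc 1 k := by
    ext y
    simp only [mem_filter, mem_Icc]
    omega
  rw [rankIn, this, Nat.card_Icc, Nat.add_sub_cancel]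

end Rank

structure IsCompatibleSeq (n N : ℕ) (D : ℕ → Prop) (a : ℕ → ℕ) : Prop where
  eq_zero : ∀ k ∉ Set.Icc 1 N, a k = 0
  mem_Icc : ∀ k ∈ Set.Icc 1 N, a k ∈ Set.Icc 1 n
  le_succ : ∀ k ∈ Set.Ico 1 N, a k ≤ a (k + 1)
  lt_succ : ∀ k ∈ Set.Ico 1 N, D k → a k < a (k + 1)

namespace IsCompatibleSeq

variable {n N : ℕ} {D : ℕ → Prop} {a : ℕ → ℕ}

lemma monotoneOn (ha : IsCompatibleSeq n N D a) : MonotoneOn a (Set.Icc 1 N) :=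
  monotoneOn_of_le_add_one Set.ordConnected_Icc fun k _ hk hk' =>
    ha.le_succ k ⟨hk.1, by simp only [Set.mem_Icc] at hk'; omega⟩

lemma lt_of_le_of_lt (ha : IsCompatibleSeq n N D a) {k j m : ℕ} (hk : 1 ≤ k) (hkj : k ≤ j)
    (hjm : j < m) (hm : m ≤ N) (hj : D j) : a k < a m :=
  calc a k ≤ a j := ha.monotoneOn ⟨hk, by omega⟩ ⟨by omega, by omega⟩ hkj
    _ < a (j + 1) := ha.lt_succ j ⟨by omega, by omega⟩ hj
    _ ≤ a m := ha.monotoneOn ⟨by omega, by omega⟩ ⟨by omega, hm⟩ hjm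

lemma add_sub_le (ha : IsCompatibleSeq n N (fun _ => True) a) {j m : ℕ} (hj : 1 ≤ j)
    (hjm : j ≤ m) (hm : m ≤ N) : a j + (m - j) ≤ a m := by
  induction m, hjm using Nat.le_induction with
  | base => simp
  | succ m hjm ih =>
    have := ha.lt_succ m ⟨by omega, by omega⟩ trivial
    have := ih (by omega)
    omega

lemma strictMonoOn (ha : IsCompatibleSeq n N (fun _ => True) a) :
    StrictMonoOn a (Set.Icc 1 N) := fun j hj m hm hjm => by
  have := ha.add_sub_le hj.1 hjm.le hm.2
  omega

lemma rankIn_image (ha : IsCompatibleSeq n N (fun _ => True) a) {k : ℕ}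
    (hk : k ∈ Set.Icc 1 N) : rankIn ((Finset.Icc 1 N).image a) (a k) = k := by
  rw [_root_.rankIn_image (by simpa using ha.strictMonoOn.injOn)]
  refine (congrArg card (filter_congr fun j hj => ?_)).trans (rankIn_Icc_one hk.2)
  exact ha.strictMonoOn.le_iff_le (by simpa using hj) hk

end IsCompatibleSeq

-- `k ↦ s_k` on `[1, N]`, where `s₁ < s₂ < ⋯` are the elements of `s`.
noncomputable def enumSeq (N : ℕ) (s : Finset ℕ) : ℕ → ℕ :=
  (Set.Icc 1 N).indicator (Function.invFunOn (rankIn s) s)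

section EnumSeq

variable {M N : ℕ} {s : Finset ℕ}

lemma enumSeq_mem_and_rankIn (hs : #s = N) {k : ℕ} (hk : k ∈ Set.Icc 1 N) :
    enumSeq N s k ∈ s ∧ rankIn s (enumSeq N s k) = k := by
  have hk' : k ∈ Set.Icc 1 #s := hs ▸ hk
  rw [enumSeq, Set.indicator_of_mem hk]
  have := (rankIn_bijOn s).surjOn hk'
  exact ⟨Function.invFunOn_mem this, Function.invFunOn_eq this⟩

lemma enumSeq_lt_succ (hs : #s = N) {k : ℕ} (hk : k ∈ Set.Ico 1 N) :
    enumSeq N s k < enumSeq N s (k + 1) := by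
  have hk₀ := enumSeq_mem_and_rankIn hs (k := k) ⟨hk.1, hk.2.le⟩
  have hk₁ := enumSeq_mem_and_rankIn hs (k := k + 1) ⟨by omega, hk.2⟩
  by_contra! h
  have := rankIn_le_rankIn (s := s) h
  omega

lemma isCompatibleSeq_enumSeq (hsub : s ⊆ Finset.Icc 1 M) (hs : #s = N) :
    IsCompatibleSeq M N (fun _ => True) (enumSeq N s) where
  eq_zero _ hk := Set.indicator_of_notMem hk _
  mem_Icc _ hk := by simpa using hsub (enumSeq_mem_and_rankIn hs hk).1
  le_succ _ hk := (enumSeq_lt_succ hs hk).le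
  lt_succ _ hk _ := enumSeq_lt_succ hs hk

lemma image_enumSeq (hs : #s = N) : (Finset.Icc 1 N).image (enumSeq N s) = s := by
  have hinj : Set.InjOn (enumSeq N s) (Finset.Icc 1 N) := fun j hj k hk h => by
    rw [coe_Icc] at hj hk
    rw [← (enumSeq_mem_and_rankIn hs hj).2, ← (enumSeq_mem_and_rankIn hs hk).2, h]
  refine eq_of_subset_of_card_le (fun x hx => ?_) ?_
  · obtain ⟨k, hk, rfl⟩ := mem_image.1 hx
    exact (enumSeq_mem_and_rankIn hs (by simpa using hk)).1
  · rw [card_image_of_injOn hinj, Nat.card_Icc, Nat.add_sub_cancel, hs]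

lemma IsCompatibleSeq.card_image {a : ℕ → ℕ} (ha : IsCompatibleSeq M N (fun _ => True) a) :
    #((Finset.Icc 1 N).image a) = N := by
  rw [card_image_of_injOn (by simpa using ha.strictMonoOn.injOn), Nat.card_Icc,
    Nat.add_sub_cancel]

lemma enumSeq_image {a : ℕ → ℕ} (ha : IsCompatibleSeq M N (fun _ => True) a) :
    enumSeq N ((Finset.Icc 1 N).image a) = a := by
  refine eq_of_eqOn_of_eq_zero (fun k hk => Set.indicator_of_notMem hk _) ha.eq_zero
    fun k hk => ?_
  have henum := enumSeq_mem_and_rankIn ha.card_image hk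
  refine (rankIn_bijOn _).injOn henum.1 (mem_image_of_mem a (by simpa using hk)) ?_
  rw [henum.2, ha.rankIn_image hk]

end EnumSeq

lemma ncard_setOf_isCompatibleSeq_true (M N : ℕ) :
    {a | IsCompatibleSeq M N (fun _ => True) a}.ncard = M.choose N := by
  have hbij : Set.BijOn (fun a => (Finset.Icc 1 N).image a)
      {a | IsCompatibleSeq M N (fun _ => True) a} ((Finset.Icc 1 M).powersetCard N) := by
    refine Set.InvOn.bijOn (f' := enumSeq N) ⟨fun a ha => enumSeq_image ha,
      fun s hs => image_enumSeq (mem_powersetCard.1 hs).2⟩ (fun a ha => ?_) (fun s hs => ?_)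
    · refine mem_powersetCard.2 ⟨fun x hx => ?_, IsCompatibleSeq.card_image ha⟩
      obtain ⟨k, hk, rfl⟩ := mem_image.1 hx
      simpa using ha.mem_Icc k (by simpa using hk)
    · exact isCompatibleSeq_enumSeq (mem_powersetCard.1 hs).1 (mem_powersetCard.1 hs).2
  rw [hbij.ncard_eq, Set.ncard_coe_finset, card_powersetCard, Nat.card_Icc, Nat.add_sub_cancel]

section Shift

variable {D : ℕ → Prop} [DecidablePred D] {n N : ℕ}

-- When `D` is the descent set of a standard tableau, the `j` with `¬ D j` are its ascents.
def ascentsBelow (D : ℕ → Prop) [DecidablePred D] (k : ℕ) : ℕ := #{j ∈ Finset.Ico 1 k | ¬ D j}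

lemma ascentsBelow_succ {k : ℕ} (hk : 1 ≤ k) :
    ascentsBelow D (k + 1) = ascentsBelow D k + if D k then 0 else 1 := by
  rw [ascentsBelow, ascentsBelow, Nat.Ico_succ_right_eq_insert_Ico hk, filter_insert]
  by_cases h : D k <;> simp [h]

lemma ascentsBelow_le_sub_one (k : ℕ) : ascentsBelow D k ≤ k - 1 :=
  (card_filter_le _ _).trans (by simp)

lemma ascentsBelow_mono : Monotone (ascentsBelow D) := fun _ _ h =>
  card_le_card (filter_subset_filter _ (Ico_subset_Ico_right h))

lemma ascentsBelow_le_add_sub (k : ℕ) :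
    ascentsBelow D N ≤ ascentsBelow D k + (N - k) :=
  calc ascentsBelow D N ≤ #({j ∈ Finset.Ico 1 k | ¬ D j} ∪ Finset.Ico k N) :=
        card_le_card fun j hj => by
          simp only [mem_filter, mem_Ico, mem_union] at hj ⊢
          by_cases hjk : j < k
          · exact Or.inl ⟨⟨hj.1.1, hjk⟩, hj.2⟩
          · exact Or.inr ⟨by omega, hj.1.2⟩
    _ ≤ ascentsBelow D k + (N - k) := (card_union_le _ _).trans (by simp [ascentsBelow])

lemma IsCompatibleSeq.shift {a : ℕ → ℕ} (ha : IsCompatibleSeq n N D a) :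
    IsCompatibleSeq (n + ascentsBelow D N) N (fun _ => True)
      ((Set.Icc 1 N).indicator (a + ascentsBelow D)) := by
  set c := (Set.Icc 1 N).indicator (a + ascentsBelow D)
  have hc : ∀ k ∈ Set.Icc 1 N, c k = a k + ascentsBelow D k := fun k hk =>
    Set.indicator_of_mem hk _
  have hlt : ∀ k ∈ Set.Ico 1 N, c k < c (k + 1) := fun k hk => by
    rw [hc k ⟨hk.1, hk.2.le⟩, hc (k + 1) ⟨by omega, hk.2⟩, ascentsBelow_succ hk.1]
    have := ha.le_succ k hk
    by_cases hD : D k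
    · have := ha.lt_succ k hk hD
      simp only [hD, if_true]
      omega
    · simp only [hD, if_false]
      omega
  refine ⟨fun k hk => Set.indicator_of_notMem hk _, fun k hk => ?_, fun k hk => (hlt k hk).le,
    fun k hk _ => hlt k hk⟩
  have hak := ha.mem_Icc k hk
  have := ascentsBelow_mono (D := D) hk.2
  rw [Set.mem_Icc] at hak ⊢
  rw [hc k hk]
  omega

lemma IsCompatibleSeq.unshift {c : ℕ → ℕ}
    (hc : IsCompatibleSeq (n + ascentsBelow D N) N (fun _ => True) c) :
    IsCompatibleSeq n N D ((Set.Icc 1 N).indicator (c - ascentsBelow D)) := by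
  set a := (Set.Icc 1 N).indicator (c - ascentsBelow D)
  have ha : ∀ k ∈ Set.Icc 1 N, a k = c k - ascentsBelow D k := fun k hk =>
    Set.indicator_of_mem hk _
  have hge : ∀ k ∈ Set.Icc 1 N, k ≤ c k := fun k hk => by
    have := hc.add_sub_le le_rfl hk.1 hk.2
    have := (hc.mem_Icc 1 ⟨le_rfl, hk.1.trans hk.2⟩).1
    omega
  have hstep : ∀ k ∈ Set.Ico 1 N, c k < c (k + 1) ∧ ascentsBelow D k < k := fun k hk =>
    ⟨hc.lt_succ k hk trivial, by have := ascentsBelow_le_sub_one (D := D) k; have := hk.1; omega⟩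
  refine ⟨fun k hk => Set.indicator_of_notMem hk _, fun k hk => ?_, fun k hk => ?_,
    fun k hk hD => ?_⟩
  · have hck := hc.add_sub_le hk.1 hk.2 le_rfl
    have hcN := (hc.mem_Icc N ⟨hk.1.trans hk.2, le_rfl⟩).2
    have := hge k hk
    have := ascentsBelow_le_sub_one (D := D) k
    have := ascentsBelow_le_add_sub (D := D) (N := N) k
    rw [ha k hk, Set.mem_Icc]
    obtain ⟨hk₁, hk₂⟩ := hk
    omega
  · have := hstep k hk
    have := hge k ⟨hk.1, hk.2.le⟩
    rw [ha k ⟨hk.1, hk.2.le⟩, ha (k + 1) ⟨by omega, hk.2⟩, ascentsBelow_succ hk.1]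
    split_ifs <;> omega
  · have := hstep k hk
    have := hge k ⟨hk.1, hk.2.le⟩
    rw [ha k ⟨hk.1, hk.2.le⟩, ha (k + 1) ⟨by omega, hk.2⟩, ascentsBelow_succ hk.1, if_pos hD]
    omega

end Shift

theorem ncard_setOf_isCompatibleSeq (n N : ℕ) (D : ℕ → Prop) [DecidablePred D] :
    {a | IsCompatibleSeq n N D a}.ncard = (n + ascentsBelow D N).choose N := by
  rw [← ncard_setOf_isCompatibleSeq_true]
  refine (Set.InvOn.bijOn (f := fun a => (Set.Icc 1 N).indicator (a + ascentsBelow D))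
    (f' := fun c => (Set.Icc 1 N).indicator (c - ascentsBelow D)) ⟨fun a ha => ?_, fun c hc => ?_⟩
    (fun a ha => ha.shift) (fun c hc => hc.unshift)).ncard_eq
  · refine eq_of_eqOn_of_eq_zero (fun k hk => Set.indicator_of_notMem hk _)
      (IsCompatibleSeq.eq_zero ha) fun k hk => ?_
    simp [Set.indicator_of_mem hk]
  · refine eq_of_eqOn_of_eq_zero (fun k hk => Set.indicator_of_notMem hk _)
      (IsCompatibleSeq.eq_zero hc) fun k hk => ?_
    have := hc.add_sub_le le_rfl hk.1 hk.2
    have := ascentsBelow_le_sub_one (D := D) k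
    simp only [Set.indicator_of_mem hk, Pi.add_apply, Pi.sub_apply]
    omega

lemma finite_setOf_isSSYT (n : ℕ) (l : Ptn) : {τ : ℕ × ℕ → ℕ | IsSSYT n l τ}.Finite :=
  (finite_setOf_eq_zero_of_notMem_of_le l.ycells_finite n).subset fun _ hτ =>
    ⟨hτ.1, fun p hp => (hτ.2.1 p hp).2⟩

lemma finite_setOf_isSYT (l : Ptn) : {σ : ℕ × ℕ → ℕ | IsSYT l σ}.Finite :=
  (finite_setOf_eq_zero_of_notMem_of_le l.ycells_finite l.size).subset fun _ hσ =>
    ⟨hσ.1, fun _ hp => (hσ.2.1.mapsTo hp).2⟩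

def IsDescent (l : Ptn) (σ : ℕ × ℕ → ℕ) (k : ℕ) : Prop :=
  ∃ p ∈ l.ycells, ∃ q ∈ l.ycells, σ p = k ∧ σ q = k + 1 ∧ p.1 < q.1

namespace IsSYT

variable {l : Ptn} {σ : ℕ × ℕ → ℕ} {p q : ℕ × ℕ}

lemma mem_Icc (hσ : IsSYT l σ) (hp : p ∈ l.ycells) : σ p ∈ Set.Icc 1 l.size :=
  hσ.2.1.mapsTo hp

lemma injOn (hσ : IsSYT l σ) : Set.InjOn σ l.ycells :=
  hσ.2.1.injOn

lemma exists_eq (hσ : IsSYT l σ) {k : ℕ} (hk : k ∈ Set.Icc 1 l.size) :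
    ∃ p ∈ l.ycells, σ p = k :=
  hσ.2.1.surjOn hk

lemma card_filter_le (hσ : IsSYT l σ) (hp : p ∈ l.ycells) :
    #{q ∈ l.cellFinset | σ q ≤ σ p} = σ p := by
  have himage : l.cellFinset.image σ = Finset.Icc 1 l.size := by
    apply coe_injective
    rw [coe_image, Ptn.coe_cellFinset, coe_Icc]
    exact hσ.2.1.image_eq
  rw [← rankIn_image (by rw [Ptn.coe_cellFinset]; exact hσ.injOn), himage,
    rankIn_Icc_one (hσ.mem_Icc hp).2]

lemma le_of_le_of_le (hσ : IsSYT l σ) (hp : p ∈ l.ycells) (hq : q ∈ l.ycells)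
    (h₁ : p.1 ≤ q.1) (h₂ : p.2 ≤ q.2) : σ p ≤ σ q := by
  have hr := Ptn.mk_mem_ycells hp hq h₁
  calc σ p ≤ σ (p.1, q.2) := by
        rcases h₂.lt_or_eq with h | h
        · exact (hσ.2.2.1 p hp _ hr rfl h).le
        · rw [← h]
    _ ≤ σ q := by
        rcases h₁.lt_or_eq with h | h
        · exact (hσ.2.2.2 _ hr q hq rfl h).le
        · rw [h]

lemma exists_pair_iff (hσ : IsSYT l σ) (hp : p ∈ l.ycells) (hq : q ∈ l.ycells) {k k' : ℕ}
    (hpk : σ p = k) (hqk : σ q = k') {R : ℕ × ℕ → ℕ × ℕ → Prop} :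
    (∃ p' ∈ l.ycells, ∃ q' ∈ l.ycells, σ p' = k ∧ σ q' = k' ∧ R p' q') ↔ R p q := by
  refine ⟨fun ⟨p', hp', q', hq', hp'k, hq'k, h⟩ => ?_, fun h => ⟨p, hp, q, hq, hpk, hqk, h⟩⟩
  rwa [hσ.injOn hp' hp (hp'k.trans hpk.symm), hσ.injOn hq' hq (hq'k.trans hqk.symm)] at h

lemma isDescent_iff (hσ : IsSYT l σ) (hp : p ∈ l.ycells) (hq : q ∈ l.ycells) {k : ℕ}
    (hpk : σ p = k) (hqk : σ q = k + 1) : IsDescent l σ k ↔ p.1 < q.1 :=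
  hσ.exists_pair_iff hp hq hpk hqk

lemma ascents_eq (hσ : IsSYT l σ) [DecidablePred (IsDescent l σ)] :
    ascents l σ = ascentsBelow (IsDescent l σ) l.size := by
  rw [ascents, ascentsBelow, ← Set.ncard_coe_finset]
  congr 1
  ext k
  simp only [Set.mem_ofPred_eq, coe_filter, mem_Ico, and_assoc]
  refine and_congr_right fun hk₁ => and_congr_right fun hkN => ?_
  obtain ⟨p, hp, hpk⟩ := hσ.exists_eq ⟨hk₁, hkN.le⟩
  obtain ⟨q, hq, hqk⟩ := hσ.exists_eq ⟨by omega, hkN⟩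
  rw [hσ.isDescent_iff hp hq hpk hqk, not_lt, hσ.exists_pair_iff hp hq hpk hqk]

lemma exists_isDescent (hσ : IsSYT l σ) (hp : p ∈ l.ycells) (hq : q ∈ l.ycells)
    (hle : σ p ≤ σ q) (hrow : p.1 < q.1) : ∃ j, σ p ≤ j ∧ j < σ q ∧ IsDescent l σ j := by
  suffices ∀ m, σ p ≤ m → ∀ q ∈ l.ycells, σ q = m → p.1 < q.1 →
      ∃ j, σ p ≤ j ∧ j < m ∧ IsDescent l σ j from this _ hle q hq rfl hrow
  intro m hm
  induction m, hm using Nat.le_induction with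
  | base => exact fun q hq hqp hrow => absurd (hσ.injOn hq hp hqp) (by rintro rfl; omega)
  | succ m hm ih =>
    intro q hq hqm hrow
    have := hσ.mem_Icc hq
    obtain ⟨r, hr, hrm⟩ := hσ.exists_eq (k := m)
      ⟨(hσ.mem_Icc hp).1.trans hm, by simp only [Set.mem_Icc] at this; omega⟩
    by_cases hpr : p.1 < r.1
    · obtain ⟨j, hj₁, hj₂, hj⟩ := ih r hr hrm hpr
      exact ⟨j, hj₁, by omega, hj⟩
    · exact ⟨m, hm, by omega, r, hr, q, hq, hrm, hqm, by omega⟩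

end IsSYT

def stdKey (τ : ℕ × ℕ → ℕ) (p : ℕ × ℕ) : ℕ ×ₗ ℕ := toLex (τ p, p.2)

lemma stdKey_lt_stdKey_iff {τ : ℕ × ℕ → ℕ} {p q : ℕ × ℕ} :
    stdKey τ p < stdKey τ q ↔ τ p < τ q ∨ τ p = τ q ∧ p.2 < q.2 :=
  Prod.Lex.toLex_lt_toLex

noncomputable def standardize (l : Ptn) (τ : ℕ × ℕ → ℕ) : ℕ × ℕ → ℕ :=
  l.ycells.indicator fun p => rankIn (l.cellFinset.image (stdKey τ)) (stdKey τ p)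

lemma stdKey_lt_of_standardize_lt {l : Ptn} {τ : ℕ × ℕ → ℕ} {p q : ℕ × ℕ}
    (hp : p ∈ l.ycells) (hq : q ∈ l.ycells) (h : standardize l τ p < standardize l τ q) :
    stdKey τ p < stdKey τ q := by
  rw [standardize, Set.indicator_of_mem hp, Set.indicator_of_mem hq] at h
  exact lt_of_not_ge fun hle => (rankIn_le_rankIn hle).not_gt h

namespace IsSSYT

variable {n : ℕ} {l : Ptn} {τ : ℕ × ℕ → ℕ} {p q : ℕ × ℕ}

lemma lt_of_lt_of_le (hτ : IsSSYT n l τ) (hp : p ∈ l.ycells) (hq : q ∈ l.ycells)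
    (h₁ : p.1 < q.1) (h₂ : p.2 ≤ q.2) : τ p < τ q := by
  have hr := Ptn.mk_mem_ycells hp hq h₁.le
  exact (hτ.2.2.1 p hp _ hr rfl h₂).trans_lt (hτ.2.2.2 _ hr q hq rfl h₁)

lemma stdKey_injOn (hτ : IsSSYT n l τ) : Set.InjOn (stdKey τ) l.ycells := by
  intro p hp q hq h
  have hval : τ p = τ q := congrArg (fun x => (ofLex x).1) h
  have hcol : p.2 = q.2 := congrArg (fun x => (ofLex x).2) h
  refine Prod.ext ?_ hcol
  by_contra hne
  rcases lt_or_gt_of_ne hne with hrow | hrow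
  · exact (hτ.2.2.2 p hp q hq hcol hrow).ne hval
  · exact (hτ.2.2.2 q hq p hp hcol.symm hrow).ne' hval

lemma standardize_apply (hτ : IsSSYT n l τ) (hp : p ∈ l.ycells) :
    standardize l τ p = #{q ∈ l.cellFinset | stdKey τ q ≤ stdKey τ p} := by
  rw [standardize, Set.indicator_of_mem hp,
    rankIn_image (by rw [Ptn.coe_cellFinset]; exact hτ.stdKey_injOn)]

lemma standardize_isSYT (hτ : IsSSYT n l τ) : IsSYT l (standardize l τ) := by
  set K := l.cellFinset.image (stdKey τ)
  have hK : Set.BijOn (stdKey τ) l.ycells K := by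
    rw [coe_image, Ptn.coe_cellFinset]
    exact hτ.stdKey_injOn.bijOn_image
  have hcard : #K = l.size := by
    rw [card_image_of_injOn (by rw [Ptn.coe_cellFinset]; exact hτ.stdKey_injOn),
      Ptn.size_eq_card_cellFinset]
  have hlt : ∀ p ∈ l.ycells, ∀ q ∈ l.ycells, stdKey τ p < stdKey τ q →
      standardize l τ p < standardize l τ q := fun p hp q hq h => by
    rw [standardize, Set.indicator_of_mem hp, Set.indicator_of_mem hq]
    exact rankIn_lt_rankIn (mem_image_of_mem _ (by simpa using hq)) h
  refine ⟨fun p hp => Set.indicator_of_notMem hp _, ?_, fun p hp q hq hrow hcol => ?_,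
    fun p hp q hq hcol hrow => hlt p hp q hq ?_⟩
  · rw [← hcard]
    exact ((rankIn_bijOn K).comp hK).congr fun p hp => (Set.indicator_of_mem hp _).symm
  · refine hlt p hp q hq (stdKey_lt_stdKey_iff.2 ?_)
    rcases (hτ.2.2.1 p hp q hq hrow hcol.le).lt_or_eq with h | h
    · exact Or.inl h
    · exact Or.inr ⟨h, hcol⟩
  · exact stdKey_lt_stdKey_iff.2 (Or.inl (hτ.2.2.2 p hp q hq hcol hrow))

end IsSSYT

noncomputable def tableauOf (l : Ptn) (σ : ℕ × ℕ → ℕ) (a : ℕ → ℕ) : ℕ × ℕ → ℕ :=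
  l.ycells.indicator (a ∘ σ)

noncomputable def seqOf (l : Ptn) (σ τ : ℕ × ℕ → ℕ) : ℕ → ℕ :=
  (Set.Icc 1 l.size).indicator (τ ∘ Function.invFunOn σ l.ycells)

section Fiber

variable {n : ℕ} {l : Ptn} {σ τ : ℕ × ℕ → ℕ} {a : ℕ → ℕ} {p q : ℕ × ℕ}

lemma tableauOf_apply (hp : p ∈ l.ycells) : tableauOf l σ a p = a (σ p) :=
  Set.indicator_of_mem hp _

lemma IsSYT.seqOf_apply (hσ : IsSYT l σ) (hp : p ∈ l.ycells) : seqOf l σ τ (σ p) = τ p := by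
  rw [seqOf, Set.indicator_of_mem (hσ.mem_Icc hp), Function.comp_apply,
    hσ.injOn.leftInvOn_invFunOn hp]

lemma IsCompatibleSeq.apply_lt_apply_of_row_lt (ha : IsCompatibleSeq n l.size (IsDescent l σ) a)
    (hσ : IsSYT l σ) (hp : p ∈ l.ycells) (hq : q ∈ l.ycells) (hle : σ p ≤ σ q)
    (hrow : p.1 < q.1) : a (σ p) < a (σ q) := by
  obtain ⟨j, hj₁, hj₂, hj⟩ := hσ.exists_isDescent hp hq hle hrow
  exact ha.lt_of_le_of_lt (hσ.mem_Icc hp).1 hj₁ hj₂ (hσ.mem_Icc hq).2 hj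

lemma isSSYT_tableauOf (hσ : IsSYT l σ) (ha : IsCompatibleSeq n l.size (IsDescent l σ) a) :
    IsSSYT n l (tableauOf l σ a) := by
  refine ⟨fun p hp => Set.indicator_of_notMem hp _, fun p hp => ?_,
    fun p hp q hq hrow hcol => ?_, fun p hp q hq hcol hrow => ?_⟩
  · rw [tableauOf_apply hp]
    exact ha.mem_Icc _ (hσ.mem_Icc hp)
  · rw [tableauOf_apply hp, tableauOf_apply hq]
    exact ha.monotoneOn (hσ.mem_Icc hp) (hσ.mem_Icc hq) (hσ.le_of_le_of_le hp hq hrow.le hcol)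
  · rw [tableauOf_apply hp, tableauOf_apply hq]
    exact ha.apply_lt_apply_of_row_lt hσ hp hq (hσ.2.2.2 p hp q hq hcol hrow).le hrow

lemma stdKey_tableauOf_lt (hσ : IsSYT l σ) (ha : IsCompatibleSeq n l.size (IsDescent l σ) a)
    (hp : p ∈ l.ycells) (hq : q ∈ l.ycells) (h : σ p < σ q) :
    stdKey (tableauOf l σ a) p < stdKey (tableauOf l σ a) q := by
  rw [stdKey_lt_stdKey_iff, tableauOf_apply hp, tableauOf_apply hq]
  rcases (ha.monotoneOn (hσ.mem_Icc hp) (hσ.mem_Icc hq) h.le).lt_or_eq with hlt | heq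
  · exact Or.inl hlt
  · have hrow : q.1 ≤ p.1 := not_lt.1 fun hrow =>
      (ha.apply_lt_apply_of_row_lt hσ hp hq h.le hrow).ne heq
    exact Or.inr ⟨heq, lt_of_not_ge fun hcol => h.not_ge (hσ.le_of_le_of_le hq hp hrow hcol)⟩

lemma standardize_tableauOf (hσ : IsSYT l σ)
    (ha : IsCompatibleSeq n l.size (IsDescent l σ) a) : standardize l (tableauOf l σ a) = σ := by
  refine eq_of_eqOn_of_eq_zero (fun p hp => Set.indicator_of_notMem hp _) hσ.1 fun p hp => ?_
  rw [(isSSYT_tableauOf hσ ha).standardize_apply hp, ← hσ.card_filter_le hp]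
  refine congrArg card (filter_congr fun q hq => ?_)
  rw [Ptn.mem_cellFinset] at hq
  refine ⟨fun hle => not_lt.1 fun hlt => (stdKey_tableauOf_lt hσ ha hp hq hlt).not_ge hle,
    fun hle => ?_⟩
  rcases hle.lt_or_eq with hlt | heq
  · exact (stdKey_tableauOf_lt hσ ha hq hp hlt).le
  · rw [hσ.injOn hq hp heq]

lemma IsSSYT.isCompatibleSeq_seqOf (hτ : IsSSYT n l τ) :
    IsCompatibleSeq n l.size (IsDescent l (standardize l τ)) (seqOf l (standardize l τ) τ) := by
  set σ := standardize l τ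
  have hσ : IsSYT l σ := hτ.standardize_isSYT
  have hstep : ∀ k ∈ Set.Ico 1 l.size, ∃ p ∈ l.ycells, ∃ q ∈ l.ycells,
      σ p = k ∧ σ q = k + 1 ∧ τ p ≤ τ q ∧ (p.1 < q.1 → τ p < τ q) := by
    intro k hk
    obtain ⟨p, hp, hpk⟩ := hσ.exists_eq ⟨hk.1, hk.2.le⟩
    obtain ⟨q, hq, hqk⟩ := hσ.exists_eq ⟨by have := hk.1; omega, hk.2⟩
    have hkey := stdKey_lt_stdKey_iff.1
      (stdKey_lt_of_standardize_lt hp hq (show σ p < σ q by omega))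
    refine ⟨p, hp, q, hq, hpk, hqk, hkey.elim le_of_lt fun h => h.1.le, fun hrow => ?_⟩
    rcases hkey with h | ⟨-, hcol⟩
    · exact h
    · exact hτ.lt_of_lt_of_le hp hq hrow hcol.le
  refine ⟨fun k hk => Set.indicator_of_notMem hk _, fun k hk => ?_, fun k hk => ?_,
    fun k hk hD => ?_⟩
  · obtain ⟨p, hp, rfl⟩ := hσ.exists_eq hk
    rw [hσ.seqOf_apply hp]
    exact hτ.2.1 p hp
  · obtain ⟨p, hp, q, hq, rfl, hqk, hle, -⟩ := hstep k hk
    rw [← hqk, hσ.seqOf_apply hp, hσ.seqOf_apply hq]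
    exact hle
  · obtain ⟨p, hp, q, hq, rfl, hqk, -, hlt⟩ := hstep k hk
    rw [← hqk, hσ.seqOf_apply hp, hσ.seqOf_apply hq]
    exact hlt ((hσ.isDescent_iff hp hq rfl hqk).1 hD)

lemma tableauOf_seqOf (hσ : IsSYT l σ) (hτ : ∀ p ∉ l.ycells, τ p = 0) :
    tableauOf l σ (seqOf l σ τ) = τ :=
  eq_of_eqOn_of_eq_zero (fun p hp => Set.indicator_of_notMem hp _) hτ fun p hp => by
    rw [tableauOf_apply hp, hσ.seqOf_apply hp]

lemma seqOf_tableauOf (hσ : IsSYT l σ) (ha : ∀ k ∉ Set.Icc 1 l.size, a k = 0) :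
    seqOf l σ (tableauOf l σ a) = a :=
  eq_of_eqOn_of_eq_zero (fun k hk => Set.indicator_of_notMem hk _) ha fun k hk => by
    obtain ⟨p, hp, rfl⟩ := hσ.exists_eq hk
    rw [hσ.seqOf_apply hp, tableauOf_apply hp]

lemma bijOn_tableauOf (n : ℕ) (hσ : IsSYT l σ) :
    Set.BijOn (tableauOf l σ) {a | IsCompatibleSeq n l.size (IsDescent l σ) a}
      {τ | IsSSYT n l τ ∧ standardize l τ = σ} :=
  Set.InvOn.bijOn (f' := seqOf l σ)
    ⟨fun _ ha => seqOf_tableauOf hσ ha.eq_zero, fun _ hτ => tableauOf_seqOf hσ hτ.1.1⟩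
    (fun _ ha => ⟨isSSYT_tableauOf hσ ha, standardize_tableauOf hσ ha⟩)
    fun _ ⟨hτ, hstd⟩ => hstd ▸ hτ.isCompatibleSeq_seqOf

end Fiber

theorem statement19_general (n : ℕ) (lam : Ptn) :
    {τ : ℕ × ℕ → ℕ | IsSSYT n lam τ}.ncard
      = ∑ᶠ σ ∈ {σ : ℕ × ℕ → ℕ | IsSYT lam σ},
          Nat.choose (n + ascents lam σ) lam.size := by
  classical
  rw [ncard_eq_finsum_ncard_fiber (finite_setOf_isSSYT n lam) (finite_setOf_isSYT lam)
    (f := standardize lam) fun τ hτ => IsSSYT.standardize_isSYT hτ]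
  refine finsum_mem_congr rfl fun σ hσ => ?_
  rw [IsSYT.ascents_eq hσ, ← ncard_setOf_isCompatibleSeq]
  exact (bijOn_tableauOf n hσ).ncard_eq.symm

/-- The number of semistandard Young tableaux of shape `λ` with entries in `[1,n]`
equals `∑_{σ ∈ SYT(λ)} C(n + 𝒜(σ), |λ|)`. -/
theorem statement19 (n : ℕ) (hn : 0 < n) (lam : Ptn) :
    {τ : ℕ × ℕ → ℕ | IsSSYT n lam τ}.ncard
      = ∑ᶠ σ ∈ {σ : ℕ × ℕ → ℕ | IsSYT lam σ},
          Nat.choose (n + ascents lam σ) lam.size :=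
  statement19_general n lam
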